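/- arXiv:0903.2915 — 2 statements merged into one kernel-verified Lean document; each statement's English description precedes it below -/
import Mathlib

section
/- For γ ∈ (0,1], the function f(r) = (1-γ)((1+r)^γ - 1) - γ + γ(1+r)^(γ-1) satisfies f(r) ≥ 0 for all r ≥ 0. -/
/-! With `t = 1 + r`, the expression equals `((1 - γ) t + γ) t ^ (γ - 1) - 1`, and Bernoulli's
inequality for the exponent `1 - γ ∈ [0, 1]` gives `t ^ (1 - γ) ≤ (1 - γ) t + γ`. -/

lemma one_le_one_add_mul_mul_rpow_sub_one {γ r : ℝ} (hγ0 : 0 ≤ γ) (hγ1 : γ ≤ 1) (hr : -1 < r) :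
    1 ≤ (1 + (1 - γ) * r) * (1 + r) ^ (γ - 1) := by
  have ht : 0 < 1 + r := by linarith
  have bernoulli : (1 + r) ^ (1 - γ) ≤ 1 + (1 - γ) * r :=
    rpow_one_add_le_one_add_mul_self hr.le (by linarith) (by linarith)
  calc (1 : ℝ) = (1 + r) ^ (1 - γ) * (1 + r) ^ (γ - 1) := by
        rw [← Real.rpow_add ht]; norm_num
    _ ≤ (1 + (1 - γ) * r) * (1 + r) ^ (γ - 1) := by gcongr

theorem stmt_0 (γ : ℝ) (hγ0 : 0 < γ) (hγ1 : γ ≤ 1) (r : ℝ) (hr : 0 ≤ r) :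
    0 ≤ (1 - γ) * ((1 + r) ^ γ - 1) - γ + γ * (1 + r) ^ (γ - 1) := by
  have key := one_le_one_add_mul_mul_rpow_sub_one hγ0.le hγ1 (by linarith : -1 < r)
  have hpow : (1 + r) ^ γ = (1 + r) ^ (γ - 1) * (1 + r) := by
    rw [← Real.rpow_add_one (by positivity)]; ring_nf
  rw [hpow]
  linear_combination key
end

section
/- Let γ ∈ (0,1) and α ∈ (γ,1), and define W_γ : ℝ^d → ℝ by W_γ(x) = ((1+|x|)^γ - 1)/γ. Then there is a constant C(d,α,γ) such that (1/γ)∫_{ℝ^d} ((1+|x|+|y|)^γ - (1+|x|)^γ)/|y|^(d+α) dy ≤ C(d,α,γ) for all x ∈ ℝ^d. -/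
open MeasureTheory Metric Set Real

private lemma real_rpow_subadd {a t p : ℝ} (ha : 0 ≤ a) (ht : 0 ≤ t) (hp : 0 ≤ p)
    (hp1 : p ≤ 1) : (a + t) ^ p ≤ a ^ p + t ^ p := by
  have h := NNReal.rpow_add_le_add_rpow a.toNNReal t.toNNReal hp hp1
  rw [← NNReal.coe_le_coe] at h
  push_cast at h
  rwa [Real.coe_toNNReal _ ha, Real.coe_toNNReal _ ht] at h

private lemma bernoulli_bound {a t p : ℝ} (ha : 1 ≤ a) (ht : 0 ≤ t) (hp : 0 ≤ p)
    (hp1 : p ≤ 1) : (a + t) ^ p - a ^ p ≤ p * t := by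
  have ha0 : 0 < a := lt_of_lt_of_le one_pos ha
  have key : (a + t) ^ p ≤ a ^ p * (1 + p * (t / a)) := by
    have h1 : (a + t) = a * (1 + t / a) := by field_simp
    rw [h1, Real.mul_rpow ha0.le (by positivity)]
    exact mul_le_mul_of_nonneg_left
      (rpow_one_add_le_one_add_mul_self (le_trans (by norm_num : (-1:ℝ) ≤ 0) (div_nonneg ht ha0.le)) hp hp1)
      (Real.rpow_nonneg ha0.le p)
  have h2 : a ^ p * (1 + p * (t / a)) = a ^ p + p * t * a ^ (p - 1) := by
    rw [Real.rpow_sub_one ha0.ne']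
    field_simp
  have h3 : a ^ (p - 1) ≤ 1 :=
    Real.rpow_le_one_of_one_le_of_nonpos ha (by linarith)
  have h4 : p * t * a ^ (p - 1) ≤ p * t := by
    calc p * t * a ^ (p - 1) ≤ p * t * 1 := by
          apply mul_le_mul_of_nonneg_left h3 (by positivity)
      _ = p * t := mul_one _
  nlinarith [key, h2]

private lemma aux_ball (d : ℕ) (hd : 0 < d) {s : ℝ} (hs0 : 0 < s) (hsd : s < d) :
    IntegrableOn (fun y : EuclideanSpace ℝ (Fin d) => ‖y‖ ^ (-s)) (ball 0 1) volume := by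
  have hmeas : Measurable fun y : EuclideanSpace ℝ (Fin d) => ‖y‖ ^ (-s) := by
    fun_prop
  set μ := volume.restrict (ball (0 : EuclideanSpace ℝ (Fin d)) 1) with hμ
  refine ⟨hmeas.aestronglyMeasurable, ?_⟩
  rw [HasFiniteIntegral,
    lintegral_enorm_of_nonneg fun y => Real.rpow_nonneg (norm_nonneg y) _]
  rw [lintegral_eq_lintegral_meas_le μ
    (Filter.Eventually.of_forall fun y => Real.rpow_nonneg (norm_nonneg y) _)
    hmeas.aemeasurable]
  set mB := volume (ball (0 : EuclideanSpace ℝ (Fin d)) 1) with hmB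
  have hmB_lt : mB < ⊤ := measure_ball_lt_top
  have hsub : ∀ t : ℝ, 0 < t →
      {a : EuclideanSpace ℝ (Fin d) | t ≤ ‖a‖ ^ (-s)} ⊆ closedBall 0 (t ^ (-s⁻¹)) := by
    intro t ht a ha
    simp only [mem_setOf_eq] at ha
    have hna : 0 < ‖a‖ := by
      rcases (norm_nonneg a).lt_or_eq with h | h
      · exact h
      · exfalso
        rw [← h, Real.zero_rpow (by simp [hs0.ne'] : -s ≠ 0)] at ha
        linarith
    have h1 : (‖a‖ ^ (-s)) ^ (-s⁻¹) ≤ t ^ (-s⁻¹) :=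
      Real.rpow_le_rpow_of_nonpos ht ha (by simp [hs0.le, inv_nonneg])
    have h2 : (‖a‖ ^ (-s)) ^ (-s⁻¹) = ‖a‖ := by
      rw [← Real.rpow_mul (norm_nonneg a)]
      rw [show -s * -s⁻¹ = s * s⁻¹ by ring, mul_inv_cancel₀ hs0.ne', Real.rpow_one]
    rw [mem_closedBall_zero_iff]
    rw [h2] at h1
    exact h1
  calc ∫⁻ t in Ioi (0:ℝ), μ {a | t ≤ ‖a‖ ^ (-s)}
      ≤ ∫⁻ t in Ioc (0:ℝ) 1 ∪ Ioi 1, μ {a | t ≤ ‖a‖ ^ (-s)} :=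
        lintegral_mono_set Ioi_subset_Ioc_union_Ioi
    _ ≤ (∫⁻ t in Ioc (0:ℝ) 1, μ {a | t ≤ ‖a‖ ^ (-s)}) +
        ∫⁻ t in Ioi (1:ℝ), μ {a | t ≤ ‖a‖ ^ (-s)} := lintegral_union_le _ _ _
    _ < ⊤ := by
        refine ENNReal.add_lt_top.2 ⟨?_, ?_⟩
        · calc (∫⁻ t in Ioc (0:ℝ) 1, μ {a | t ≤ ‖a‖ ^ (-s)})
              ≤ ∫⁻ _ in Ioc (0:ℝ) 1, mB := by
                refine setLIntegral_mono measurable_const fun t _ => ?_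
                calc μ {a | t ≤ ‖a‖ ^ (-s)} ≤ μ univ := measure_mono (subset_univ _)
                  _ = mB := by rw [hμ, Measure.restrict_apply_univ]
            _ = mB * volume (Ioc (0:ℝ) 1) := by rw [setLIntegral_const]
            _ < ⊤ := by
                refine ENNReal.mul_lt_top hmB_lt ?_
                simp [Real.volume_Ioc]
        · have hexp : -(s⁻¹ * d) < -1 := by
            rw [neg_lt_neg_iff, lt_inv_mul_iff₀ hs0, mul_one]
            exact hsd
          have hfin : (∫⁻ t in Ioi (1:ℝ), ENNReal.ofReal (t ^ (-(s⁻¹ * (d:ℝ))))) < ⊤ :=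
            (integrableOn_Ioi_rpow_of_lt hexp one_pos).lintegral_lt_top
          calc (∫⁻ t in Ioi (1:ℝ), μ {a | t ≤ ‖a‖ ^ (-s)})
              ≤ ∫⁻ t in Ioi (1:ℝ), ENNReal.ofReal (t ^ (-(s⁻¹ * (d:ℝ)))) * mB := by
                refine setLIntegral_mono (by fun_prop) fun t ht => ?_
                have ht0 : (0:ℝ) < t := lt_trans one_pos ht
                calc μ {a | t ≤ ‖a‖ ^ (-s)}
                    ≤ volume {a : EuclideanSpace ℝ (Fin d) | t ≤ ‖a‖ ^ (-s)} :=
                      Measure.restrict_le_self _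
                  _ ≤ volume (closedBall (0 : EuclideanSpace ℝ (Fin d)) (t ^ (-s⁻¹))) :=
                      measure_mono (hsub t ht0)
                  _ = ENNReal.ofReal ((t ^ (-s⁻¹)) ^
                        (Module.finrank ℝ (EuclideanSpace ℝ (Fin d)))) * mB :=
                      Measure.addHaar_closedBall _ _ (Real.rpow_nonneg ht0.le _)
                  _ = ENNReal.ofReal (t ^ (-(s⁻¹ * (d:ℝ)))) * mB := by
                      congr 2
                      rw [← Real.rpow_natCast (t ^ (-s⁻¹)), ← Real.rpow_mul ht0.le]
                      rw [finrank_euclideanSpace_fin]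
                      push_cast
                      ring
            _ = (∫⁻ t in Ioi (1:ℝ), ENNReal.ofReal (t ^ (-(s⁻¹ * (d:ℝ))))) * mB :=
                lintegral_mul_const' _ _ hmB_lt.ne
            _ < ⊤ := ENNReal.mul_lt_top hfin hmB_lt

private lemma aux_tail (d : ℕ) (hd : 0 < d) {s : ℝ} (hds : (d : ℝ) < s) :
    IntegrableOn (fun y : EuclideanSpace ℝ (Fin d) => ‖y‖ ^ (-s))
      (ball 0 1)ᶜ volume := by
  have hs0 : 0 < s := lt_of_le_of_lt (Nat.cast_nonneg d) hds
  have h1 : Integrable (fun y : EuclideanSpace ℝ (Fin d) =>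
      (2:ℝ) ^ s * (1 + ‖y‖) ^ (-s)) volume := by
    refine Integrable.const_mul ?_ _
    exact integrable_one_add_norm (by simpa [finrank_euclideanSpace_fin] using hds)
  have hm : Measurable fun y : EuclideanSpace ℝ (Fin d) => ‖y‖ ^ (-s) := by fun_prop
  refine Integrable.mono' h1.integrableOn hm.aestronglyMeasurable.restrict ?_
  refine (ae_restrict_iff' measurableSet_ball.compl).2 (Filter.Eventually.of_forall ?_)
  intro y hy
  have hy1 : 1 ≤ ‖y‖ := by
    simpa [mem_ball, dist_zero_right, not_lt] using hy
  rw [Real.norm_eq_abs, abs_of_nonneg (Real.rpow_nonneg (norm_nonneg y) _)]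
  have hle : (1 + ‖y‖) / 2 ≤ ‖y‖ := by linarith
  calc ‖y‖ ^ (-s) ≤ ((1 + ‖y‖) / 2) ^ (-s) :=
        Real.rpow_le_rpow_of_nonpos (by positivity) hle (by linarith)
    _ = (2:ℝ) ^ s * (1 + ‖y‖) ^ (-s) := by
        rw [Real.div_rpow (by positivity) (by norm_num),
          Real.rpow_neg (by norm_num : (0:ℝ) ≤ 2)]
        field_simp

theorem stmt_12 (d : ℕ) (hd : 0 < d) (γ α : ℝ) (hγ0 : 0 < γ) (hγ1 : γ < 1)
    (hαγ : γ < α) (hα1 : α < 1) :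
    (∀ x : EuclideanSpace ℝ (Fin d),
      Integrable (fun y : EuclideanSpace ℝ (Fin d) =>
        ((1 + ‖x‖ + ‖y‖) ^ γ - (1 + ‖x‖) ^ γ) / ‖y‖ ^ ((d : ℝ) + α))) ∧
    ∃ C : ℝ, ∀ x : EuclideanSpace ℝ (Fin d),
      (1 / γ) * ∫ y : EuclideanSpace ℝ (Fin d),
        ((1 + ‖x‖ + ‖y‖) ^ γ - (1 + ‖x‖) ^ γ) / ‖y‖ ^ ((d : ℝ) + α) ≤ C := by
  have hα0 : 0 < α := hγ0.trans hαγ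
  have hd1 : (1:ℝ) ≤ d := by exact_mod_cast hd
  -- the two comparison functions
  have hs1_0 : (0:ℝ) < (d:ℝ) + α - 1 := by linarith
  have hs1_d : (d:ℝ) + α - 1 < d := by linarith
  have hs2_d : (d:ℝ) < (d:ℝ) + α - γ := by linarith
  have hball := aux_ball d hd hs1_0 hs1_d
  have htail := aux_tail d hd hs2_d
  -- pointwise bounds
  have hda_pos : (0:ℝ) < (d:ℝ) + α := by linarith
  have hf_nonneg : ∀ x y : EuclideanSpace ℝ (Fin d),
      0 ≤ ((1 + ‖x‖ + ‖y‖) ^ γ - (1 + ‖x‖) ^ γ) / ‖y‖ ^ ((d : ℝ) + α) := by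
    intro x y
    apply div_nonneg _ (Real.rpow_nonneg (norm_nonneg y) _)
    rw [sub_nonneg]
    exact Real.rpow_le_rpow (by positivity) (by linarith [norm_nonneg y]) hγ0.le
  have hb1 : ∀ x y : EuclideanSpace ℝ (Fin d),
      ((1 + ‖x‖ + ‖y‖) ^ γ - (1 + ‖x‖) ^ γ) / ‖y‖ ^ ((d : ℝ) + α) ≤
        γ * ‖y‖ ^ (-((d:ℝ) + α - 1)) := by
    intro x y
    rcases eq_or_lt_of_le (norm_nonneg y) with h | h
    · rw [← h, Real.zero_rpow hda_pos.ne', div_zero,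
        Real.zero_rpow (by linarith : -((d:ℝ) + α - 1) ≠ 0), mul_zero]
    · have hnum : (1 + ‖x‖ + ‖y‖) ^ γ - (1 + ‖x‖) ^ γ ≤ γ * ‖y‖ :=
        bernoulli_bound (by linarith [norm_nonneg x]) (norm_nonneg y) hγ0.le hγ1.le
      calc ((1 + ‖x‖ + ‖y‖) ^ γ - (1 + ‖x‖) ^ γ) / ‖y‖ ^ ((d : ℝ) + α)
          ≤ (γ * ‖y‖) / ‖y‖ ^ ((d : ℝ) + α) := by
            have hden : (0:ℝ) < ‖y‖ ^ ((d : ℝ) + α) := Real.rpow_pos_of_pos h _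
            gcongr
        _ = γ * ‖y‖ ^ (-((d:ℝ) + α - 1)) := by
            rw [show -((d:ℝ) + α - 1) = 1 - ((d:ℝ) + α) by ring,
              Real.rpow_sub h, Real.rpow_one, mul_div_assoc]
  have hb2 : ∀ x y : EuclideanSpace ℝ (Fin d),
      ((1 + ‖x‖ + ‖y‖) ^ γ - (1 + ‖x‖) ^ γ) / ‖y‖ ^ ((d : ℝ) + α) ≤
        ‖y‖ ^ (-((d:ℝ) + α - γ)) := by
    intro x y
    rcases eq_or_lt_of_le (norm_nonneg y) with h | h
    · rw [← h, Real.zero_rpow hda_pos.ne', div_zero,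
        Real.zero_rpow (by linarith : -((d:ℝ) + α - γ) ≠ 0)]
    · have hnum : (1 + ‖x‖ + ‖y‖) ^ γ - (1 + ‖x‖) ^ γ ≤ ‖y‖ ^ γ := by
        have := real_rpow_subadd (by positivity : (0:ℝ) ≤ 1 + ‖x‖) (norm_nonneg y)
          hγ0.le hγ1.le
        linarith
      calc ((1 + ‖x‖ + ‖y‖) ^ γ - (1 + ‖x‖) ^ γ) / ‖y‖ ^ ((d : ℝ) + α)
          ≤ ‖y‖ ^ γ / ‖y‖ ^ ((d : ℝ) + α) := by
            have hden : (0:ℝ) < ‖y‖ ^ ((d : ℝ) + α) := Real.rpow_pos_of_pos h _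
            gcongr
        _ = ‖y‖ ^ (-((d:ℝ) + α - γ)) := by
            rw [show -((d:ℝ) + α - γ) = γ - ((d:ℝ) + α) by ring, Real.rpow_sub h]
  have hmeas : ∀ x : EuclideanSpace ℝ (Fin d),
      AEStronglyMeasurable (fun y : EuclideanSpace ℝ (Fin d) =>
        ((1 + ‖x‖ + ‖y‖) ^ γ - (1 + ‖x‖) ^ γ) / ‖y‖ ^ ((d : ℝ) + α)) volume := by
    intro x
    apply Measurable.aestronglyMeasurable
    fun_prop
  -- integrability on the ball and its complement
  have hOnBall : ∀ x : EuclideanSpace ℝ (Fin d),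
      IntegrableOn (fun y : EuclideanSpace ℝ (Fin d) =>
        ((1 + ‖x‖ + ‖y‖) ^ γ - (1 + ‖x‖) ^ γ) / ‖y‖ ^ ((d : ℝ) + α))
        (ball 0 1) volume := by
    intro x
    refine Integrable.mono' (hball.const_mul γ) (hmeas x).restrict
      (Filter.Eventually.of_forall fun y => ?_)
    rw [Real.norm_eq_abs, abs_of_nonneg (hf_nonneg x y)]
    exact hb1 x y
  have hOnCompl : ∀ x : EuclideanSpace ℝ (Fin d),
      IntegrableOn (fun y : EuclideanSpace ℝ (Fin d) =>
        ((1 + ‖x‖ + ‖y‖) ^ γ - (1 + ‖x‖) ^ γ) / ‖y‖ ^ ((d : ℝ) + α))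
        (ball 0 1)ᶜ volume := by
    intro x
    refine Integrable.mono' htail (hmeas x).restrict
      (Filter.Eventually.of_forall fun y => ?_)
    rw [Real.norm_eq_abs, abs_of_nonneg (hf_nonneg x y)]
    exact hb2 x y
  have hint : ∀ x : EuclideanSpace ℝ (Fin d),
      Integrable (fun y : EuclideanSpace ℝ (Fin d) =>
        ((1 + ‖x‖ + ‖y‖) ^ γ - (1 + ‖x‖) ^ γ) / ‖y‖ ^ ((d : ℝ) + α)) volume := by
    intro x
    rw [← integrableOn_univ, ← union_compl_self (ball (0 : EuclideanSpace ℝ (Fin d)) 1)]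
    exact (hOnBall x).union (hOnCompl x)
  refine ⟨hint, ?_⟩
  set C1 : ℝ := ∫ y in ball (0 : EuclideanSpace ℝ (Fin d)) 1, ‖y‖ ^ (-((d:ℝ) + α - 1))
  set C2 : ℝ := ∫ y in (ball (0 : EuclideanSpace ℝ (Fin d)) 1)ᶜ, ‖y‖ ^ (-((d:ℝ) + α - γ))
  refine ⟨(1 / γ) * (γ * C1 + C2), fun x => ?_⟩
  have hIball : (∫ y in ball (0 : EuclideanSpace ℝ (Fin d)) 1,
      ((1 + ‖x‖ + ‖y‖) ^ γ - (1 + ‖x‖) ^ γ) / ‖y‖ ^ ((d : ℝ) + α)) ≤ γ * C1 := by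
    have := setIntegral_mono_on (hOnBall x) (hball.const_mul γ)
      measurableSet_ball (fun y _ => hb1 x y)
    rwa [integral_const_mul] at this
  have hIcompl : (∫ y in (ball (0 : EuclideanSpace ℝ (Fin d)) 1)ᶜ,
      ((1 + ‖x‖ + ‖y‖) ^ γ - (1 + ‖x‖) ^ γ) / ‖y‖ ^ ((d : ℝ) + α)) ≤ C2 :=
    setIntegral_mono_on (hOnCompl x) htail
      measurableSet_ball.compl (fun y _ => hb2 x y)
  have hsplit : (∫ y : EuclideanSpace ℝ (Fin d),
      ((1 + ‖x‖ + ‖y‖) ^ γ - (1 + ‖x‖) ^ γ) / ‖y‖ ^ ((d : ℝ) + α)) =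
      (∫ y in ball (0 : EuclideanSpace ℝ (Fin d)) 1,
        ((1 + ‖x‖ + ‖y‖) ^ γ - (1 + ‖x‖) ^ γ) / ‖y‖ ^ ((d : ℝ) + α)) +
      ∫ y in (ball (0 : EuclideanSpace ℝ (Fin d)) 1)ᶜ,
        ((1 + ‖x‖ + ‖y‖) ^ γ - (1 + ‖x‖) ^ γ) / ‖y‖ ^ ((d : ℝ) + α) :=
    (integral_add_compl measurableSet_ball (hint x)).symm
  have : (∫ y : EuclideanSpace ℝ (Fin d),
      ((1 + ‖x‖ + ‖y‖) ^ γ - (1 + ‖x‖) ^ γ) / ‖y‖ ^ ((d : ℝ) + α)) ≤ γ * C1 + C2 := by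
    rw [hsplit]; exact add_le_add hIball hIcompl
  exact mul_le_mul_of_nonneg_left this (by positivity)
end
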